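/- Let X be a real random variable with |X| < γ - Δ/2 almost surely, D uniform on [-Δ/2, Δ/2] independent of X, and define the subtractive dithered quantization error E = Q(X + D) - D - X where Q is the mid-tread uniform quantizer with support γ and spacing Δ. Then E is uniformly distributed on [-Δ/2, Δ/2] and is independent of X. -/

import Mathlib

/-! Without overload, `Q(y) - y` is the representative of `-y` modulo `Δ` in `(-Δ/2, Δ/2]`.
Hence for a fixed value `x` of `X`, the error `d ↦ Q(x + d) - d - x` is the reflection
`d ↦ -x - d` followed by reduction modulo `Δ`, and both maps preserve Lebesgue measure on a
period interval (the second because it factors through the circle `ℝ ⧸ Δℤ`). So the error is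
uniform given `X = x`, for almost every `x`. A conditional law that does not depend on `x` gives
independence: `(x, d) ↦ (x, e(x, d))` is a skew product preserving `law X ⊗ law D`. -/

open MeasureTheory ProbabilityTheory Real

/-- The mid-tread scalar uniform quantizer with support `γ` and spacing `Δ`. -/
noncomputable def midtreadQ (γ Δ : ℝ) (x : ℝ) : ℝ :=
  if |x| < γ then Δ * ⌊x / Δ + 1 / 2⌋ else Real.sign x * γ

open Set

lemma measurePreserving_toIocMod {p : ℝ} (hp : 0 < p) (a b : ℝ) :
    MeasurePreserving (toIocMod hp a) (volume.restrict (Ioc b (b + p)))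
      (volume.restrict (Ioc a (a + p))) := by
  have : Fact (0 < p) := ⟨hp⟩
  have hval : MeasurePreserving ((↑) : Ioc a (a + p) → ℝ)
      (Measure.comap Subtype.val volume) (volume.restrict (Ioc a (a + p))) :=
    ⟨measurable_subtype_coe, map_comap_subtype_coe measurableSet_Ioc _⟩
  exact (hval.comp (AddCircle.measurePreserving_equivIoc p)).comp
    (AddCircle.measurePreserving_mk p b)

lemma measurePreserving_toIocMod_sub {p : ℝ} (hp : 0 < p) (a c : ℝ) :
    MeasurePreserving (fun d => toIocMod hp a (c - d)) (volume.restrict (Ioc a (a + p)))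
      (volume.restrict (Ioc a (a + p))) := by
  have hrefl : MeasurePreserving (c - ·) (volume.restrict (Ioc a (a + p)))
      (volume.restrict (Ioc (c - a - p) (c - a - p + p))) := by
    have h := (Measure.measurePreserving_sub_left volume c).restrict_preimage
      (measurableSet_Ico (a := c - a - p) (b := c - a - p + p))
    rwa [Measure.restrict_congr_set Ico_ae_eq_Ioc, preimage_const_sub_Ico,
      show c - (c - a - p + p) = a by ring, show c - (c - a - p) = a + p by ring] at h
  exact (measurePreserving_toIocMod hp a _).comp hrefl

lemma Real.measurable_sign : Measurable Real.sign :=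
  Measurable.ite measurableSet_Iio measurable_const <|
    Measurable.ite measurableSet_Ioi measurable_const measurable_const

lemma measurable_midtreadQ (γ Δ : ℝ) : Measurable (midtreadQ γ Δ) := by
  refine Measurable.ite (measurableSet_lt measurable_abs measurable_const) ?_
    (Real.measurable_sign.mul_const γ)
  have hfloor : Measurable fun x : ℝ => ⌊x / Δ + 1 / 2⌋ := by fun_prop
  exact measurable_const.mul (measurable_from_top.comp hfloor)

lemma midtreadQ_sub_self {γ Δ y : ℝ} (hΔ : 0 < Δ) (hy : |y| < γ) :
    midtreadQ γ Δ y - y = toIocMod hΔ (-(Δ / 2)) (-y) := by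
  have hdiv : toIcoDiv hΔ (Δ / 2) y = ⌊y / Δ + 1 / 2⌋ - 1 := by
    rw [toIcoDiv_eq_floor, ← Int.floor_sub_one]; congr 1; field_simp; ring
  rw [midtreadQ, if_pos hy, toIocMod_neg, neg_neg, ← self_sub_toIcoDiv_zsmul, hdiv, zsmul_eq_mul]
  push_cast
  ring

lemma map_midtreadQ_error_cond_Icc {γ Δ x : ℝ} (hΔ : 0 < Δ) (hx : |x| < γ - Δ / 2) :
    (cond volume (Icc (-(Δ / 2)) (Δ / 2))).map (fun d => midtreadQ γ Δ (x + d) - d - x) =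
      cond volume (Icc (-(Δ / 2)) (Δ / 2)) := by
  have hI : Icc (-(Δ / 2)) (Δ / 2) =ᵐ[volume] Ioc (-(Δ / 2)) (-(Δ / 2) + Δ) := by
    rw [show -(Δ / 2) + Δ = Δ / 2 by ring]; exact Ioc_ae_eq_Icc.symm
  have hQ : ∀ d ∈ Ioc (-(Δ / 2)) (-(Δ / 2) + Δ),
      midtreadQ γ Δ (x + d) - d - x = toIocMod hΔ (-(Δ / 2)) (-x - d) := by
    rintro d ⟨hd₁, hd₂⟩
    have hxd : |x + d| < γ := by
      have := abs_add_le x d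
      have := abs_le.2 (⟨by linarith, by linarith⟩ : -(Δ / 2) ≤ d ∧ d ≤ Δ / 2)
      linarith
    rw [sub_sub, add_comm d x, midtreadQ_sub_self hΔ hxd, neg_add']
  rw [ProbabilityTheory.cond, Measure.map_smul, Measure.restrict_congr_set hI,
    Measure.map_congr ((ae_restrict_iff' measurableSet_Ioc).2 (.of_forall hQ)),
    (measurePreserving_toIocMod_sub hΔ _ _).map_eq]

theorem ProbabilityTheory.IndepFun.skew_product {Ω α β : Type*} [MeasurableSpace Ω]
    [MeasurableSpace α] [MeasurableSpace β] {P : Measure Ω} [IsProbabilityMeasure P]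
    {X : Ω → α} {D : Ω → β} {g : α → β → β} (hXD : IndepFun X D P) (hX : Measurable X)
    (hD : Measurable D) (hg : Measurable (Function.uncurry g))
    (hgD : ∀ᵐ x ∂P.map X, (P.map D).map (g x) = P.map D) :
    IndepFun X (fun ω => g (X ω) (D ω)) P ∧ P.map (fun ω => g (X ω) (D ω)) = P.map D := by
  have hE : Measurable fun ω => g (X ω) (D ω) := hg.comp (hX.prodMk hD)
  have hskew : Measurable fun p : α × β => (id p.1, g p.1 p.2) := measurable_fst.prodMk hg
  have hpair : P.map (fun ω => (X ω, g (X ω) (D ω))) = (P.map X).prod (P.map D) := calc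
    _ = (P.map fun ω => (X ω, D ω)).map fun p => (id p.1, g p.1 p.2) := by
      rw [Measure.map_map hskew (hX.prodMk hD)]; rfl
    _ = (P.map X).prod (P.map D) := by
      rw [(indepFun_iff_map_prod_eq_prod_map_map hX.aemeasurable hD.aemeasurable).1 hXD]
      exact ((MeasurePreserving.id (P.map X)).skew_product hg hgD).map_eq
  have hlaw : P.map (fun ω => g (X ω) (D ω)) = P.map D := calc
    _ = (P.map fun ω => (X ω, g (X ω) (D ω))).map Prod.snd := by
      rw [Measure.map_map measurable_snd (hX.prodMk hE)]; rfl
    _ = P.map D := by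
      have := Measure.isProbabilityMeasure_map (μ := P) hX.aemeasurable
      rw [hpair, Measure.map_snd_prod, measure_univ, one_smul]
  exact ⟨(indepFun_iff_map_prod_eq_prod_map_map hX.aemeasurable hE.aemeasurable).2
    (by rw [hpair, hlaw]), hlaw⟩

theorem sdq_error_uniform_indep_general {Ω : Type*} [MeasurableSpace Ω] (P : Measure Ω)
    [IsProbabilityMeasure P] (γ Δ : ℝ) (hΔ : 0 < Δ)
    (X D : Ω → ℝ) (hX : Measurable X) (hD : Measurable D)
    (hXbound : ∀ᵐ ω ∂P, |X ω| < γ - Δ / 2)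
    (hDunif : pdf.IsUniform D (Set.Icc (-(Δ / 2)) (Δ / 2)) P volume)
    (hindep : IndepFun D X P) :
    pdf.IsUniform (fun ω => midtreadQ γ Δ (X ω + D ω) - D ω - X ω)
        (Set.Icc (-(Δ / 2)) (Δ / 2)) P volume ∧
      IndepFun (fun ω => midtreadQ γ Δ (X ω + D ω) - D ω - X ω) X P := by
  have hg : Measurable (Function.uncurry fun x d => midtreadQ γ Δ (x + d) - d - x) :=
    ((measurable_midtreadQ γ Δ).comp (measurable_fst.add measurable_snd)).sub measurable_snd
      |>.sub measurable_fst
  have hXbound' : ∀ᵐ x ∂P.map X, |x| < γ - Δ / 2 :=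
    (ae_map_iff hX.aemeasurable (measurableSet_lt measurable_abs measurable_const)).2 hXbound
  obtain ⟨hindep', hlaw⟩ := hindep.symm.skew_product hX hD hg <| by
    filter_upwards [hXbound'] with x hx
    rw [hDunif]
    exact map_midtreadQ_error_cond_Icc hΔ hx
  exact ⟨hlaw.trans hDunif, hindep'.symm⟩

/-- Subtractive dithered quantization theorem (scalar case): if `|X| < γ - Δ/2` a.s.,
the dither `D` is uniform on `[-Δ/2, Δ/2]` and independent of `X`, then the SDQ error
`E = Q(X + D) - D - X` is uniform on `[-Δ/2, Δ/2]` and independent of `X`. -/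
theorem sdq_error_uniform_indep {Ω : Type*} [MeasurableSpace Ω] (P : Measure Ω)
    [IsProbabilityMeasure P] (γ Δ : ℝ) (hΔ : 0 < Δ) (hγ : 0 < γ)
    (X D : Ω → ℝ) (hX : Measurable X) (hD : Measurable D)
    (hXbound : ∀ᵐ ω ∂P, |X ω| < γ - Δ / 2)
    (hDunif : pdf.IsUniform D (Set.Icc (-(Δ / 2)) (Δ / 2)) P volume)
    (hindep : IndepFun D X P) :
    pdf.IsUniform (fun ω => midtreadQ γ Δ (X ω + D ω) - D ω - X ω)
        (Set.Icc (-(Δ / 2)) (Δ / 2)) P volume ∧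
      IndepFun (fun ω => midtreadQ γ Δ (X ω + D ω) - D ω - X ω) X P :=
  sdq_error_uniform_indep_general P γ Δ hΔ X D hX hD hXbound hDunif hindep
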